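/- Let f₀, f₁ be orientation-preserving circle homeomorphisms with fixed points and no common fixed points, and suppose there is a cycle s₀ < s₁ < ⋯ < s_{n−1} < s₀ + 1 = s_n (in a lift), where s_{k+1} lies in the basin of attraction of s_k under f_{k mod 2} for each k. Then for every x ∈ S¹ and every ε > 0 there exists a finite composition h of f₀ and f₁ such that |h(x) − s₀| < ε. -/

import Mathlib

open Filter Topology
open Fin.NatCast

/-!
Let `S` be the set of points that some composition of `f₀, f₁` maps into the `ε`-ball around
`s₀`. Since the maps are continuous, `S` is open, and it is closed under taking preimages.
Hence if `s_k ∈ S`, the orbit of `s_{k+1}` under `f_{k mod 2}`, which converges to `s_k`,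
eventually enters `S`, so `s_{k+1} ∈ S`; going around the cycle, every `s_k` lies in `S`.
A point `y ∈ [s_k, s_{k+1}]` is squeezed by monotonicity between the fixed point `s_k` and the
orbit of `s_{k+1}`, so its orbit converges to `s_k` as well and `y ∈ S`. Finally every point of
the circle has a lift in `[s₀, s₀ + 1) = [s₀, s_n)`, which is covered by these intervals.
-/

section Words

variable {ι α : Type*}

def wordMap (f : ι → α → α) (w : List ι) : α → α :=
  w.foldr (fun i g => f i ∘ g) id

variable {f : ι → α → α}

theorem wordMap_append (v w : List ι) (x : α) :
    wordMap f (v ++ w) x = wordMap f v (wordMap f w x) := by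
  induction v with
  | nil => rfl
  | cons i v ih => exact congrArg (f i) ih

theorem wordMap_replicate (m : ℕ) (i : ι) (x : α) :
    wordMap f (List.replicate m i) x = (f i)^[m] x := by
  induction m with
  | zero => rfl
  | succ m ih => rw [Function.iterate_succ_apply', ← ih]; rfl

theorem continuous_wordMap [TopologicalSpace α] (hf : ∀ i, Continuous (f i)) (w : List ι) :
    Continuous (wordMap f w) := by
  induction w with
  | nil => exact continuous_id
  | cons i w ih => exact (hf i).comp ih

theorem wordMap_add_const [Add α] {a : α} (hf : ∀ i x, f i (x + a) = f i x + a)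
    (w : List ι) (x : α) : wordMap f w (x + a) = wordMap f w x + a := by
  induction w with
  | nil => rfl
  | cons i w ih => exact (congrArg (f i) ih).trans (hf i _)

def wordPreimage (f : ι → α → α) (U : Set α) : Set α :=
  ⋃ w, wordMap f w ⁻¹' U

theorem subset_wordPreimage (U : Set α) : U ⊆ wordPreimage f U :=
  fun _ hy => Set.mem_iUnion.2 ⟨[], hy⟩

theorem isOpen_wordPreimage [TopologicalSpace α] (hf : ∀ i, Continuous (f i)) {U : Set α}
    (hU : IsOpen U) : IsOpen (wordPreimage f U) :=
  isOpen_iUnion fun w => hU.preimage (continuous_wordMap hf w)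

theorem mem_wordPreimage_of_iterate_mem {U : Set α} {i : ι} {m : ℕ} {y : α}
    (hy : (f i)^[m] y ∈ wordPreimage f U) : y ∈ wordPreimage f U := by
  obtain ⟨w, hw⟩ := Set.mem_iUnion.1 hy
  refine Set.mem_iUnion.2 ⟨w ++ List.replicate m i, ?_⟩
  rwa [Set.mem_preimage, wordMap_append, wordMap_replicate]

theorem mem_wordPreimage_of_tendsto [TopologicalSpace α] {U : Set α}
    (hopen : IsOpen (wordPreimage f U)) {i : ι} {y a : α}
    (hy : Tendsto (fun m => (f i)^[m] y) atTop (𝓝 a)) (ha : a ∈ wordPreimage f U) :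
    y ∈ wordPreimage f U :=
  have ⟨_, hm⟩ := (hy.eventually (hopen.mem_nhds ha)).exists
  mem_wordPreimage_of_iterate_mem hm

end Words

theorem tendsto_iterate_of_mem_Icc {α : Type*} [TopologicalSpace α] [LinearOrder α]
    [OrderTopology α] {g : α → α} (hg : Monotone g) {a b y : α} (ha : g a = a)
    (hb : Tendsto (fun m => g^[m] b) atTop (𝓝 a)) (hy : y ∈ Set.Icc a b) :
    Tendsto (fun m => g^[m] y) atTop (𝓝 a) :=
  tendsto_of_tendsto_of_tendsto_of_le_of_le tendsto_const_nhds hb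
    (fun m => (Function.iterate_fixed ha m).symm.trans_le (hg.iterate m hy.1))
    (fun m => hg.iterate m hy.2)

theorem exists_lt_mem_Ico_of_le_of_lt {α : Type*} [LinearOrder α] {s : ℕ → α} {y : α} :
    ∀ {n : ℕ}, s 0 ≤ y → y < s n → ∃ k < n, y ∈ Set.Ico (s k) (s (k + 1))
  | 0, h0, hn => absurd h0 (not_le.2 hn)
  | n + 1, h0, hn => by
    by_cases h : y < s n
    · obtain ⟨k, hk, hy⟩ := exists_lt_mem_Ico_of_le_of_lt h0 h
      exact ⟨k, hk.trans n.lt_succ_self, hy⟩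
    · exact ⟨n, n.lt_succ_self, not_lt.1 h, hn⟩

theorem cycle_attracts_every_point_general
    (f : Fin 2 → ℝ → ℝ)
    (hmono : ∀ i, StrictMono (f i))
    (hcont : ∀ i, Continuous (f i))
    (hlift : ∀ i x, f i (x + 1) = f i x + 1)
    (n : ℕ) (s : ℕ → ℝ)
    (hsn : s n = s 0 + 1)
    (hfix : ∀ k ≤ n, f (k % 2) (s k) = s k)
    (hbasin : ∀ k < n,
      Tendsto (fun m => (f (k % 2))^[m] (s (k + 1))) atTop (𝓝 (s k))) :
    ∀ (x : ℝ) (ε : ℝ), 0 < ε →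
      ∃ (w : List (Fin 2)) (m : ℤ),
        |(w.foldr (fun i g => f i ∘ g) id) x - (s 0 + m)| < ε := by
  intro x ε hε
  set S := wordPreimage f (Metric.ball (s 0) ε)
  have hS : IsOpen S := isOpen_wordPreimage hcont Metric.isOpen_ball
  have hcycle : ∀ k ≤ n, s k ∈ S := by
    intro k hk
    induction k with
    | zero => exact subset_wordPreimage _ (Metric.mem_ball_self hε)
    | succ k ih => exact mem_wordPreimage_of_tendsto hS (hbasin k hk) (ih (by omega))
  set m := ⌊x - s 0⌋
  obtain ⟨k, hk, hy⟩ := exists_lt_mem_Ico_of_le_of_lt (s := s) (n := n) (y := x - m)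
    (by linarith [Int.floor_le (x - s 0)]) (by linarith [Int.lt_floor_add_one (x - s 0)])
  obtain ⟨w, hw⟩ := Set.mem_iUnion.1 <| mem_wordPreimage_of_tendsto hS
    (tendsto_iterate_of_mem_Icc (hmono _).monotone (hfix k hk.le) (hbasin k hk)
      (Set.Ico_subset_Icc_self hy)) (hcycle k hk.le)
  refine ⟨w, m, ?_⟩
  have hshift : wordMap f w x = wordMap f w (x - m) + m := by
    simpa using AddConstMapClass.map_add_int
      (⟨wordMap f w, wordMap_add_const hlift w⟩ : AddConstMap ℝ ℝ 1 1) (x - m) m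
  change |wordMap f w x - (s 0 + m)| < ε
  rw [hshift, add_sub_add_right_eq_sub, ← Real.dist_eq]
  exact Metric.mem_ball.1 hw

/-- Given lifts `f₀, f₁` of circle homeomorphisms with fixed points, no common fixed
points, and a cycle `s₀ < s₁ < ⋯ < s_{n−1} < s₀ + 1 = s_n` where `s_{k+1}` is attracted
to `s_k` by `f_{k mod 2}`, every point of the circle can be moved arbitrarily close to
`s₀` (mod 1) by a finite composition of `f₀` and `f₁`. -/
theorem cycle_attracts_every_point
    (f : Fin 2 → ℝ → ℝ)
    (hmono : ∀ i, StrictMono (f i))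
    (hcont : ∀ i, Continuous (f i))
    (hbij : ∀ i, Function.Bijective (f i))
    (hlift : ∀ i x, f i (x + 1) = f i x + 1)
    (hnc : ∀ x : ℝ, ¬(f 0 x = x ∧ f 1 x = x))
    (n : ℕ) (hn : 1 ≤ n) (s : ℕ → ℝ)
    (horder : ∀ k < n, s k < s (k + 1))
    (hsn : s n = s 0 + 1)
    (hfix : ∀ k ≤ n, f (k % 2) (s k) = s k)
    (hbasin : ∀ k < n,
      Tendsto (fun m => (f (k % 2))^[m] (s (k + 1))) atTop (𝓝 (s k))) :
    ∀ (x : ℝ) (ε : ℝ), 0 < ε →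
      ∃ (w : List (Fin 2)) (m : ℤ),
        |(w.foldr (fun i g => f i ∘ g) id) x - (s 0 + m)| < ε :=
  cycle_attracts_every_point_general f hmono hcont hlift n s hsn hfix hbasin
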